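/- Horizontal stopping sets: if S_A is a stopping set for the Tanner graph T(H^T), then for every a' ∈ A, the set S_A × {a'} of qubits of HGP(H) is a stopping set for the Tanner graph T(H_Z). -/

import Mathlib

/-!
The check `(b, a')` of `H_Z` sees the qubit `(a, a')` exactly when `H b a = 1`, and a check
`(b, c)` with `c ≠ a'` sees no qubit of the row `A × {a'}`. So, read through the embedding
`a ↦ (a, a')`, every check of `H_Z` restricted to that row is either a check of `Hᵀ`'s Tanner
graph or empty, and neither can meet `S_A` exactly once.
-/

/-- Qubits of `HGP(H)`: pairs in `A × A` (bit-bit) or `B × B` (check-check),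
with `|A| = n`, `|B| = r`. -/
abbrev QubitIdx (n r : ℕ) := (Fin n × Fin n) ⊕ (Fin r × Fin r)

/-- Z-type parity-check matrix of the hypergraph product code `HGP(H)`. -/
def hgpHZ {r n : ℕ} (H : Matrix (Fin r) (Fin n) (ZMod 2)) :
    Matrix (Fin r × Fin n) (QubitIdx n r) (ZMod 2) :=
  fun c q =>
    match q with
    | Sum.inl (a, a'') => if a'' = c.2 then H c.1 a else 0
    | Sum.inr (b'', b') => if b'' = c.1 then H b' c.2 else 0

open Finset

def IsStoppingSet {κ ι R : Type*} [One R] [DecidableEq R] (M : Matrix κ ι R) (S : Finset ι) :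
    Prop :=
  ∀ c, (S.filter (fun v => M c v = 1)).card ≠ 1

theorem IsStoppingSet.image {κ κ' ι ι' R : Type*} [One R] [DecidableEq R] [DecidableEq ι']
    {M : Matrix κ ι R} {M' : Matrix κ' ι' R} {S : Finset ι} (hS : IsStoppingSet M S)
    {f : ι → ι'} (hf : Function.Injective f)
    (hrow : ∀ c', (∃ c, ∀ v, M' c' (f v) = M c v) ∨ ∀ v, M' c' (f v) ≠ 1) :
    IsStoppingSet M' (S.image f) := by
  intro c'
  rw [filter_image, card_image_of_injective _ hf]
  rcases hrow c' with ⟨c, hc⟩ | hzero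
  · simpa only [hc] using hS c
  · simp [hzero]

theorem hgpHZ_inl_row {r n : ℕ} (H : Matrix (Fin r) (Fin n) (ZMod 2)) (a' : Fin n)
    (c : Fin r × Fin n) :
    (∃ b, ∀ a, hgpHZ H c (Sum.inl (a, a')) = H b a) ∨
      ∀ a, hgpHZ H c (Sum.inl (a, a')) ≠ 1 := by
  by_cases h : a' = c.2
  · exact Or.inl ⟨c.1, fun a => by simp [hgpHZ, h]⟩
  · exact Or.inr fun a => by simp [hgpHZ, h]

/-- **horizontal stopping sets.** If `S_A ⊆ A` is a stopping set for the
Tanner graph `T(Hᵀ)` (with the `A`-side as variable nodes, adjacency `H b a`), then for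
every `a' ∈ A` the set `S_A × {a'}` of qubits of `HGP(H)` is a stopping set for the
Tanner graph `T(H_Z)`. -/
theorem horizontal_stopping_sets
    {r n : ℕ} (H : Matrix (Fin r) (Fin n) (ZMod 2)) (SA : Finset (Fin n))
    (hSA : ∀ b : Fin r, (SA.filter (fun a => H b a = 1)).card ≠ 1)
    (a' : Fin n) :
    ∀ c : Fin r × Fin n,
      (((SA.image (fun a => (Sum.inl (a, a') : QubitIdx n r)))).filter
          (fun q => hgpHZ H c q = 1)).card ≠ 1 :=
  IsStoppingSet.image (M := H) hSA (fun _ _ h => by simpa using h) (hgpHZ_inl_row H a')
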